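/- Let 0 < β ≤ α and let S = {(a, b) ∈ ℝ² : β ≤ |a − b| ≤ α}. Define P : ℝ² → ℝ² by: P(a,b) = ((a+b+α)/2, (a+b−α)/2) if b < a − α; P(a,b) = (a,b) if a − α ≤ b ≤ a − β; P(a,b) = ((a+b+β)/2, (a+b−β)/2) if a − β < b ≤ a; P(a,b) = ((a+b−β)/2, (a+b+β)/2) if a < b < a + β; P(a,b) = (a,b) if a + β ≤ b ≤ a + α; and P(a,b) = ((a+b−α)/2, (a+b+α)/2) if b > a + α. Then for every (a,b) ∈ ℝ², P(a,b) ∈ S and ‖(a,b) − P(a,b)‖ ≤ ‖(a,b) − s‖ for every s ∈ S; i.e., P(a,b) is a nearest point of the (nonconvex) set S to (a,b). -/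

import Mathlib

/-!
Only the difference `z 0 - z 1` of a point `z` is constrained by membership in `S`, and in the
rotated coordinates `(z 0 + z 1, z 0 - z 1)` the squared distance splits as
`‖pt a b - pt x y‖² = ((a + b) - (x + y))² / 2 + ((a - b) - (x - y))² / 2`.
Hence a nearest point of `S` keeps the sum `a + b` and replaces the difference `a - b` by a
nearest point of the one-dimensional set `{d | β ≤ |d| ≤ α}`, which is `a - b` itself, `±β` or `±α`
according to the six cases of `P`; each of these is checked by the reverse triangle inequality.
-/

open scoped Classical

noncomputable def pt (a b : ℝ) : EuclideanSpace ℝ (Fin 2) :=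
  (WithLp.equiv 2 (Fin 2 → ℝ)).symm ![a, b]

open Set

lemma pt_apply_zero_apply_one (z : EuclideanSpace ℝ (Fin 2)) : pt (z 0) (z 1) = z := by
  ext i; fin_cases i <;> rfl

lemma norm_pt_sub_pt_sq (a b x y : ℝ) :
    ‖pt a b - pt x y‖ ^ 2 = ((a + b) - (x + y)) ^ 2 / 2 + ((a - b) - (x - y)) ^ 2 / 2 := by
  rw [EuclideanSpace.norm_sq_eq]
  simp only [pt, WithLp.equiv_symm_apply, PiLp.sub_apply, Real.norm_eq_abs, sq_abs,
    Fin.sum_univ_two, Fin.isValue, Matrix.cons_val_zero, Matrix.cons_val_one,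
    Matrix.cons_val_fin_one]
  ring

lemma isMinOn_norm_pt_sub {A : Set ℝ} {a b x y p : ℝ} (hsum : x + y = a + b)
    (hdiff : x - y = p) (hmin : IsMinOn (fun d => |a - b - d|) A p) :
    IsMinOn (fun s => ‖pt a b - s‖) {z | z 0 - z 1 ∈ A} (pt x y) := by
  refine isMinOn_iff.mpr fun s hs => ?_
  rw [← pt_apply_zero_apply_one s, ← pow_le_pow_iff_left₀ (norm_nonneg _) (norm_nonneg _)
    two_ne_zero, norm_pt_sub_pt_sq, norm_pt_sub_pt_sq, hsum, hdiff, sub_self]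
  have hclose : (a - b - p) ^ 2 ≤ (a - b - (s 0 - s 1)) ^ 2 :=
    sq_le_sq.mpr (isMinOn_iff.mp hmin _ hs)
  have hsum_nonneg : 0 ≤ (a + b - (s 0 + s 1)) ^ 2 := sq_nonneg _
  linarith

lemma isMinOn_abs_sub_self (t : ℝ) (A : Set ℝ) : IsMinOn (fun d => |t - d|) A t :=
  isMinOn_iff.mpr fun d _ => by simp

section Annulus

variable {α β t : ℝ}

lemma right_mem_abs_preimage_Icc (hβ : 0 < β) (hβα : β ≤ α) : α ∈ (|·|) ⁻¹' Icc β α := by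
  simp [abs_of_pos (hβ.trans_le hβα), hβα]

lemma left_mem_abs_preimage_Icc (hβ : 0 < β) (hβα : β ≤ α) : β ∈ (|·|) ⁻¹' Icc β α := by
  simp [abs_of_pos hβ, hβα]

lemma neg_mem_abs_preimage_Icc {d : ℝ} (hd : d ∈ (|·|) ⁻¹' Icc β α) :
    -d ∈ (|·|) ⁻¹' Icc β α := by
  simpa using hd

lemma isMinOn_abs_sub_of_lt (h : α < t) :
    IsMinOn (fun d => |t - d|) ((|·|) ⁻¹' Icc β α) α := by
  refine isMinOn_iff.mpr fun d hd => ?_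
  calc |t - α| = t - α := abs_of_pos (sub_pos.mpr h)
    _ ≤ |t| - |d| := by linarith [le_abs_self t, hd.2]
    _ ≤ |t - d| := abs_sub_abs_le_abs_sub t d

lemma isMinOn_abs_sub_of_nonneg_of_lt (h0 : 0 ≤ t) (h : t < β) :
    IsMinOn (fun d => |t - d|) ((|·|) ⁻¹' Icc β α) β := by
  refine isMinOn_iff.mpr fun d hd => ?_
  calc |t - β| = β - t := by rw [abs_sub_comm, abs_of_pos (sub_pos.mpr h)]
    _ ≤ |d| - |t| := by rw [abs_of_nonneg h0]; linarith [hd.1]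
    _ ≤ |d - t| := abs_sub_abs_le_abs_sub d t
    _ = |t - d| := abs_sub_comm d t

lemma IsMinOn.abs_sub_neg {p : ℝ} (h : IsMinOn (fun d => |-t - d|) ((|·|) ⁻¹' Icc β α) p) :
    IsMinOn (fun d => |t - d|) ((|·|) ⁻¹' Icc β α) (-p) := by
  refine isMinOn_iff.mpr fun d hd => ?_
  have := isMinOn_iff.mp h (-d) (neg_mem_abs_preimage_Icc hd)
  rwa [show -t - -d = -(t - d) by ring, show -t - p = -(t - -p) by ring, abs_neg, abs_neg] at this

end Annulus

/-- The explicit piecewise map `P` is a nearest-point selection for the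
nonconvex set `S = {(a,b) ∈ ℝ² : β ≤ |a - b| ≤ α}` (where `0 < β ≤ α`):
`P(a,b) ∈ S` and `‖(a,b) - P(a,b)‖ ≤ ‖(a,b) - s‖` for every `s ∈ S`. -/
theorem stmt_18 (α β : ℝ) (hβ : 0 < β) (hβα : β ≤ α) (a b : ℝ) :
    let S : Set (EuclideanSpace ℝ (Fin 2)) := {z | β ≤ |z 0 - z 1| ∧ |z 0 - z 1| ≤ α}
    let P : EuclideanSpace ℝ (Fin 2) :=
      if b < a - α then pt ((a + b + α) / 2) ((a + b - α) / 2)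
      else if b ≤ a - β then pt a b
      else if b ≤ a then pt ((a + b + β) / 2) ((a + b - β) / 2)
      else if b < a + β then pt ((a + b - β) / 2) ((a + b + β) / 2)
      else if b ≤ a + α then pt a b
      else pt ((a + b - α) / 2) ((a + b + α) / 2)
    P ∈ S ∧ ∀ s ∈ S, ‖pt a b - P‖ ≤ ‖pt a b - s‖ := by
  intro S P
  have nearest : ∀ x y p, x + y = a + b → x - y = p → p ∈ (|·|) ⁻¹' Icc β α →
      IsMinOn (fun d => |a - b - d|) ((|·|) ⁻¹' Icc β α) p →
      pt x y ∈ S ∧ ∀ s ∈ S, ‖pt a b - pt x y‖ ≤ ‖pt a b - s‖ := by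
    rintro x y p hsum rfl hmem hmin
    exact ⟨hmem, isMinOn_iff.mp (isMinOn_norm_pt_sub hsum rfl hmin)⟩
  have hα := right_mem_abs_preimage_Icc hβ hβα
  have hβ' := left_mem_abs_preimage_Icc hβ hβα
  unfold P
  split_ifs with h₁ h₂ h₃ h₄ h₅
  · exact nearest _ _ α (by ring) (by ring) hα (isMinOn_abs_sub_of_lt (by linarith))
  · have hab : a - b ∈ (|·|) ⁻¹' Icc β α := by
      rw [mem_preimage, mem_Icc, abs_of_pos (by linarith : 0 < a - b)]
      exact ⟨by linarith, by linarith⟩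
    exact nearest _ _ _ rfl rfl hab (isMinOn_abs_sub_self _ _)
  · exact nearest _ _ β (by ring) (by ring) hβ'
      (isMinOn_abs_sub_of_nonneg_of_lt (by linarith) (by linarith))
  · exact nearest _ _ (-β) (by ring) (by ring) (neg_mem_abs_preimage_Icc hβ')
      (IsMinOn.abs_sub_neg (isMinOn_abs_sub_of_nonneg_of_lt (by linarith) (by linarith)))
  · have hab : a - b ∈ (|·|) ⁻¹' Icc β α := by
      rw [mem_preimage, mem_Icc, abs_of_neg (by linarith : a - b < 0)]
      exact ⟨by linarith, by linarith⟩
    exact nearest _ _ _ rfl rfl hab (isMinOn_abs_sub_self _ _)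
  · exact nearest _ _ (-α) (by ring) (by ring) (neg_mem_abs_preimage_Icc hα)
      (IsMinOn.abs_sub_neg (isMinOn_abs_sub_of_lt (by linarith)))
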